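/- Let ξ̄ > 0, let U : [0,ξ̄] → ℝ be absolutely continuous with square-integrable derivative U', let y₀ ∈ ℝ, and define y(ξ) = y₀ + ∫₀^ξ U'(ζ)² dζ. Let μ be the push-forward of Lebesgue measure on [0,ξ̄] under y, and let u : [y(0), y(ξ̄)] → ℝ be an absolutely continuous function satisfying u(y(ξ)) = U(ξ) for all ξ ∈ [0,ξ̄]. Then on the interval [y(0), y(ξ̄)] the absolutely continuous part of μ has density u'(x)², i.e. μ^a(A) = ∫_A u'(x)² dx for every Borel set A ⊆ [y(0), y(ξ̄)]. -/

import Mathlib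

open MeasureTheory Set Real
open Filter Topology


lemma primitive_mono {f : ℝ → ℝ} (hi : Integrable f volume) (hnn : ∀ x, 0 ≤ f x) (a : ℝ) :
    Monotone (fun t => ∫ s in a..t, f s) := by
  intro s t hst
  have h1 : IntervalIntegrable f volume a s := hi.intervalIntegrable
  have h2 : IntervalIntegrable f volume s t := hi.intervalIntegrable
  have : (∫ r in a..t, f r) - (∫ r in a..s, f r) = ∫ r in s..t, f r := by
    rw [← intervalIntegral.integral_add_adjacent_intervals h1 h2]; ring
  have hnn' : 0 ≤ ∫ r in s..t, f r :=
    intervalIntegral.integral_nonneg hst (fun x _ => hnn x)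
  linarith

lemma ae_hasDerivAt_primitive_nonneg {f : ℝ → ℝ} (hm : Measurable f)
    (hi : Integrable f volume) (hnn : ∀ x, 0 ≤ f x) (a : ℝ) :
    ∀ᵐ x, HasDerivAt (fun t => ∫ s in a..t, f s) (f x) x := by
  set F : ℝ → ℝ := fun t => ∫ s in a..t, f s with hF
  have hmono : Monotone F := primitive_mono hi hnn a
  have hcont : Continuous F :=
    intervalIntegral.continuous_primitive (fun a b => hi.intervalIntegrable) a
  set S : StieltjesFunction ℝ := ⟨F, hmono, fun x => (hcont.continuousAt).continuousWithinAt⟩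
    with hS
  have hmeasS : S.measure = volume.withDensity (fun x => ENNReal.ofReal (f x)) := by
    refine Measure.ext_of_Ioc S.measure _ (fun c d hcd => ?_)
    rw [S.measure_Ioc, withDensity_apply _ measurableSet_Ioc]
    have : F d - F c = ∫ s in Ioc c d, f s := by
      have : (∫ r in a..d, f r) - (∫ r in a..c, f r) = ∫ r in c..d, f r := by
        rw [← intervalIntegral.integral_add_adjacent_intervals
          (hi.intervalIntegrable (b := c)) (hi.intervalIntegrable)]; ring
      rw [hF]; simp only []
      rw [this, intervalIntegral.integral_of_le hcd.le]
    show ENNReal.ofReal (F d - F c) = _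
    rw [this, ofReal_integral_eq_lintegral_ofReal hi.integrableOn
      (Eventually.of_forall (fun x => hnn x))]
  have hrn : S.measure.rnDeriv volume =ᵐ[volume] (fun x => ENNReal.ofReal (f x)) := by
    rw [hmeasS]
    exact Measure.rnDeriv_withDensity volume (hm.ennreal_ofReal)
  filter_upwards [S.ae_hasDerivAt, hrn] with x hx hx'
  rw [hx'] at hx
  simpa [ENNReal.toReal_ofReal (hnn x)] using hx

lemma ae_hasDerivAt_primitive {f : ℝ → ℝ} (hm : Measurable f)
    (hi : Integrable f volume) (a : ℝ) :
    ∀ᵐ x, HasDerivAt (fun t => ∫ s in a..t, f s) (f x) x := by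
  have h1 := ae_hasDerivAt_primitive_nonneg (f := fun x => max (f x) 0)
    (hm.max measurable_const) hi.pos_part (fun x => le_max_right _ _) a
  have h2 := ae_hasDerivAt_primitive_nonneg (f := fun x => max (-f x) 0)
    (hm.neg.max measurable_const) (by simpa using hi.neg.pos_part)
    (fun x => le_max_right _ _) a
  filter_upwards [h1, h2] with x hx1 hx2
  have hsub := hx1.sub hx2
  have hi2 : Integrable (fun s => max (-f s) 0) volume := by
    simpa using hi.neg.pos_part
  have heq : (fun t => (∫ s in a..t, max (f s) 0) - ∫ s in a..t, max (-f s) 0)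
      = fun t => ∫ s in a..t, f s := by
    funext t
    rw [← intervalIntegral.integral_sub hi.pos_part.intervalIntegrable
      hi2.intervalIntegrable]
    exact intervalIntegral.integral_congr (fun s _ => max_zero_sub_max_neg_zero_eq_self (f s))
  rw [show ((fun t => ∫ s in a..t, max (f s) 0) - fun t => ∫ s in a..t, max (-f s) 0) = fun t => ∫ s in a..t, f s from heq] at hsub
  simpa [max_zero_sub_max_neg_zero_eq_self] using hsub

/-- The set where a function has a prescribed derivative is measurable. -/
lemma measurableSet_hasDerivAt (F g : ℝ → ℝ) (hg : Measurable g) :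
    MeasurableSet {x | HasDerivAt F (g x) x} := by
  have : {x | HasDerivAt F (g x) x}
      = {x | DifferentiableAt ℝ F x} ∩ {x | deriv F x = g x} := by
    ext x
    simp only [mem_setOf_eq, mem_inter_iff]
    constructor
    · intro h; exact ⟨h.differentiableAt, h.deriv⟩
    · rintro ⟨h1, h2⟩; rw [← h2]; exact h1.hasDerivAt
  rw [this]
  exact (measurableSet_of_differentiableAt ℝ F).inter
    (measurableSet_eq_fun (measurable_deriv F) hg)


/-- Lemma 1 of the paper (density identification): if `y(ξ) = y₀ + ∫₀^ξ U'(ζ)² dζ`,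
`μ` is the push-forward of Lebesgue measure on `[0,ξ̄]` under `y`, and `u` is an
absolutely continuous function on `[y(0), y(ξ̄)]` with `u(y(ξ)) = U(ξ)`, then on
`[y(0), y(ξ̄)]` the absolutely continuous part of `μ` has density `u'(x)²`. -/
theorem stmt5 (ξbar : ℝ) (hξbar : 0 < ξbar)
    (U U' : ℝ → ℝ)
    (hU'meas : Measurable U')
    (hU'int : IntegrableOn U' (Set.Icc 0 ξbar))
    (hU'L2 : MemLp U' 2 (volume.restrict (Set.Icc 0 ξbar)))
    (hU : ∀ ξ ∈ Set.Icc (0:ℝ) ξbar, U ξ = U 0 + ∫ ζ in (0:ℝ)..ξ, U' ζ)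
    (y₀ : ℝ) (y : ℝ → ℝ)
    (hy : ∀ ξ : ℝ, y ξ = y₀ + ∫ ζ in (0:ℝ)..ξ, (U' ζ) ^ 2)
    (μ : Measure ℝ)
    (hμ : μ = Measure.map y (volume.restrict (Set.Icc 0 ξbar)))
    (u u' : ℝ → ℝ)
    (hu'meas : Measurable u')
    (hu'int : IntegrableOn u' (Set.Icc (y 0) (y ξbar)))
    (hu : ∀ x ∈ Set.Icc (y 0) (y ξbar), u x = u (y 0) + ∫ s in (y 0)..x, u' s)
    (huy : ∀ ξ ∈ Set.Icc (0:ℝ) ξbar, u (y ξ) = U ξ) :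
    ∀ A : Set ℝ, A ⊆ Set.Icc (y 0) (y ξbar) → MeasurableSet A →
      (volume.withDensity (μ.rnDeriv volume)) A =
        ∫⁻ x in A, ENNReal.ofReal ((u' x) ^ 2) := by
  -- ### Setup: truncated integrands and global primitives
  set I : Set ℝ := Set.Icc (y 0) (y ξbar) with hI
  set w : ℝ → ℝ := (Set.Icc (0:ℝ) ξbar).indicator (fun ζ => U' ζ ^ 2) with hwdef
  set w₂ : ℝ → ℝ := (Set.Icc (0:ℝ) ξbar).indicator U' with hw2def
  set v : ℝ → ℝ := I.indicator u' with hvdef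
  have hwm : Measurable w := (hU'meas.pow_const 2).indicator measurableSet_Icc
  have hw2m : Measurable w₂ := hU'meas.indicator measurableSet_Icc
  have hvm : Measurable v := hu'meas.indicator measurableSet_Icc
  have hwnn : ∀ x, 0 ≤ w x :=
    fun x => Set.indicator_nonneg (fun ζ _ => sq_nonneg (U' ζ)) x
  have hU2int : IntegrableOn (fun ζ => U' ζ ^ 2) (Set.Icc 0 ξbar) := hU'L2.integrable_sq
  have hwint : Integrable w := (integrable_indicator_iff measurableSet_Icc).2 hU2int
  have hw2int : Integrable w₂ := (integrable_indicator_iff measurableSet_Icc).2 hU'int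
  have hvint : Integrable v := (integrable_indicator_iff measurableSet_Icc).2 hu'int
  set Y : ℝ → ℝ := fun t => y₀ + ∫ s in (0:ℝ)..t, w s with hYdef
  set W : ℝ → ℝ := fun t => U 0 + ∫ s in (0:ℝ)..t, w₂ s with hWdef
  set V : ℝ → ℝ := fun x => u (y 0) + ∫ s in (y 0)..x, v s with hVdef
  -- Y agrees with y on [0, ξbar]
  have hYy : ∀ ξ ∈ Set.Icc (0:ℝ) ξbar, Y ξ = y ξ := by
    intro ξ hξ
    rw [hy ξ, hYdef]
    simp only [add_right_inj]
    refine intervalIntegral.integral_congr (fun s hs => ?_)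
    rw [Set.uIcc_of_le hξ.1] at hs
    have hmem : s ∈ Set.Icc (0:ℝ) ξbar := ⟨hs.1, hs.2.trans hξ.2⟩
    simp only [hwdef]
    exact Set.indicator_of_mem hmem _
  have hWU : ∀ ξ ∈ Set.Icc (0:ℝ) ξbar, W ξ = U ξ := by
    intro ξ hξ
    rw [hU ξ hξ, hWdef]
    simp only [add_right_inj]
    refine intervalIntegral.integral_congr (fun s hs => ?_)
    rw [Set.uIcc_of_le hξ.1] at hs
    have hmem : s ∈ Set.Icc (0:ℝ) ξbar := ⟨hs.1, hs.2.trans hξ.2⟩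
    simp only [hw2def]
    exact Set.indicator_of_mem hmem _
  have hy0 : y 0 ≤ y ξbar := by
    rw [hy 0, hy ξbar]
    simp only [intervalIntegral.integral_same, add_zero]
    have : 0 ≤ ∫ ζ in (0:ℝ)..ξbar, U' ζ ^ 2 :=
      intervalIntegral.integral_nonneg hξbar.le (fun x _ => sq_nonneg _)
    linarith
  have hVu : ∀ x ∈ I, V x = u x := by
    intro x hx
    rw [hu x hx, hVdef]
    simp only [add_right_inj]
    refine intervalIntegral.integral_congr (fun s hs => ?_)
    rw [Set.uIcc_of_le hx.1] at hs
    have hmem : s ∈ I := ⟨hs.1, hs.2.trans hx.2⟩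
    simp only [hvdef]
    exact Set.indicator_of_mem hmem _
  -- monotonicity and continuity
  have hYmono : Monotone Y := fun s t hst => by
    have h := primitive_mono hwint hwnn 0 hst
    simp only at h
    exact add_le_add_right h y₀
  have hYcont : Continuous Y := continuous_const.add
    (intervalIntegral.continuous_primitive (fun a b => hwint.intervalIntegrable) 0)
  have hYmeas : Measurable Y := hYcont.measurable
  -- a.e. derivatives
  have hYd : ∀ᵐ ξ, HasDerivAt Y (w ξ) ξ := by
    filter_upwards [ae_hasDerivAt_primitive hwm hwint 0] with ξ hξ
    exact hξ.const_add y₀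
  have hWd : ∀ᵐ ξ, HasDerivAt W (w₂ ξ) ξ := by
    filter_upwards [ae_hasDerivAt_primitive hw2m hw2int 0] with ξ hξ
    exact hξ.const_add (U 0)
  have hVd : ∀ᵐ x, HasDerivAt V (v x) x := by
    filter_upwards [ae_hasDerivAt_primitive hvm hvint (y 0)] with x hx
    exact hx.const_add (u (y 0))
  -- Y maps [0,ξbar] into I
  have hYmaps : ∀ ξ ∈ Set.Icc (0:ℝ) ξbar, Y ξ ∈ I := by
    intro ξ hξ
    constructor
    · rw [← hYy 0 ⟨le_refl 0, hξbar.le⟩]; exact hYmono hξ.1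
    · rw [← hYy ξbar ⟨hξbar.le, le_refl ξbar⟩]; exact hYmono hξ.2
  -- ### the good set D
  set D : Set ℝ := {ξ | ξ ∈ Set.Ioo (0:ℝ) ξbar ∧ HasDerivAt Y (w ξ) ξ ∧
      HasDerivAt W (w₂ ξ) ξ ∧ w ξ ≠ 0} with hDdef
  have hDmeas : MeasurableSet D := by
    have hset : D = Set.Ioo 0 ξbar ∩ ({ξ | HasDerivAt Y (w ξ) ξ} ∩
        ({ξ | HasDerivAt W (w₂ ξ) ξ} ∩ {ξ | w ξ = 0}ᶜ)) := by
      ext ξ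
      simp only [hDdef, Set.mem_inter_iff, Set.mem_setOf_eq, Set.mem_compl_iff, ne_eq]
    rw [hset]
    exact measurableSet_Ioo.inter ((measurableSet_hasDerivAt Y w hwm).inter
      ((measurableSet_hasDerivAt W w₂ hw2m).inter
        (measurableSet_eq_fun hwm measurable_const).compl))
  have hDsub : D ⊆ Set.Icc 0 ξbar := fun ξ hξ => ⟨hξ.1.1.le, hξ.1.2.le⟩
  have hwpos : ∀ ξ ∈ D, 0 < w ξ := fun ξ hξ => (hwnn ξ).lt_of_ne (Ne.symm hξ.2.2.2)
  -- Y is strictly increasing at points of D, hence injective on D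
  have hYlt : ∀ a ∈ D, ∀ b, a < b → Y a < Y b := by
    intro a ha b hab
    by_contra hle
    push_neg at hle
    have hda : HasDerivAt Y (w a) a := ha.2.1
    have hslope : Tendsto (slope Y a) (𝓝[>] a) (𝓝 (w a)) :=
      (hasDerivAt_iff_tendsto_slope.1 hda).mono_left
        (nhdsWithin_mono a (fun x hx => ne_of_gt hx))
    have hev : ∀ᶠ t in 𝓝[>] a, slope Y a t = 0 := by
      filter_upwards [Ioo_mem_nhdsGT_of_mem (Set.mem_Ico.2 ⟨le_refl a, hab⟩)] with t ht
      have h1 : Y t ≤ Y a := (hYmono ht.2.le).trans hle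
      have h2 : Y a ≤ Y t := hYmono ht.1.le
      rw [slope_def_field, le_antisymm h1 h2]
      simp
    have h0 : w a = 0 := tendsto_nhds_unique (hslope.congr' hev) tendsto_const_nhds
    exact ha.2.2.2 h0
  have hYinj : Set.InjOn Y D := by
    intro a ha b hb hab
    rcases lt_trichotomy a b with h | h | h
    · exact absurd hab (hYlt a ha b h).ne
    · exact h
    · exact absurd hab.symm (hYlt b hb a h).ne
  -- ### change of variables wrapper
  have CoV : ∀ s : Set ℝ, MeasurableSet s → s ⊆ D → ∀ g : ℝ → ENNReal,
      ∫⁻ x in Y '' s, g x = ∫⁻ ξ in s, ENNReal.ofReal (w ξ) * g (Y ξ) := by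
    intro s hs hsD g
    have h := lintegral_image_eq_lintegral_abs_det_fderiv_mul volume hs
      (f' := fun ξ => (1 : ℝ →L[ℝ] ℝ).smulRight (w ξ))
      (fun ξ hξ => ((hsD hξ).2.1.hasDerivWithinAt).hasFDerivWithinAt)
      (hYinj.mono hsD) g
    rw [h]
    refine setLIntegral_congr_fun hs (fun ξ hξ => ?_)
    rw [show ((1 : ℝ →L[ℝ] ℝ).smulRight (w ξ)).det = w ξ from ContinuousLinearMap.det_toSpanSingleton (w ξ), abs_of_nonneg (hwnn ξ)]
  -- ### decomposition of μ
  have hres : volume.restrict (Set.Icc (0:ℝ) ξbar)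
      = volume.restrict D + volume.restrict (Set.Icc (0:ℝ) ξbar \ D) := by
    rw [← Measure.restrict_union disjoint_sdiff_right (measurableSet_Icc.diff hDmeas),
      Set.union_diff_cancel hDsub]
  have hyY : y =ᵐ[volume.restrict (Set.Icc (0:ℝ) ξbar)] Y :=
    (ae_restrict_iff' measurableSet_Icc).2 (Eventually.of_forall fun ξ hξ => (hYy ξ hξ).symm)
  have hμsplit : μ = Measure.map Y (volume.restrict D)
      + Measure.map Y (volume.restrict (Set.Icc (0:ℝ) ξbar \ D)) := by
    rw [hμ, Measure.map_congr hyY, hres, Measure.map_add _ _ hYmeas]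
  -- ### the singular part
  set N : Set ℝ := {ξ | ¬ HasDerivAt Y (w ξ) ξ} ∪ {ξ | ¬ HasDerivAt W (w₂ ξ) ξ} with hNdef
  have hNnull : volume N = 0 :=
    measure_union_null (ae_iff.1 hYd) (ae_iff.1 hWd)
  set Z : Set ℝ := {ξ | HasDerivAt Y (w ξ) ξ ∧ w ξ = 0} with hZdef
  have hZmeas : MeasurableSet Z := by
    have : Z = {ξ | HasDerivAt Y (w ξ) ξ} ∩ {ξ | w ξ = 0} := rfl
    rw [this]
    exact (measurableSet_hasDerivAt Y w hwm).inter (measurableSet_eq_fun hwm measurable_const)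
  have hZimg : volume (Y '' Z) = 0 := by
    have h := addHaar_image_le_lintegral_abs_det_fderiv volume hZmeas
      (f' := fun ξ => (1 : ℝ →L[ℝ] ℝ).smulRight (w ξ))
      (fun ξ hξ => (hξ.1.hasDerivWithinAt).hasFDerivWithinAt)
    refine le_antisymm (h.trans_eq ?_) zero_le
    have : ∀ ξ ∈ Z, ENNReal.ofReal |((1 : ℝ →L[ℝ] ℝ).smulRight (w ξ)).det| = 0 := by
      intro ξ hξ
      rw [show ((1 : ℝ →L[ℝ] ℝ).smulRight (w ξ)).det = w ξ from ContinuousLinearMap.det_toSpanSingleton (w ξ), hξ.2]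
      simp
    rw [setLIntegral_congr_fun hZmeas this]
    simp
  have hScov : volume (Y '' Z ∪ ({Y 0, Y ξbar} : Set ℝ)) = 0 :=
    measure_union_null hZimg ((Set.countable_insert.2 (Set.countable_singleton _)).measure_zero _)
  obtain ⟨S, hSsub, hSmeas, hSnull⟩ := exists_measurable_superset_of_null hScov
  have hsing : Measure.map Y (volume.restrict (Set.Icc (0:ℝ) ξbar \ D)) ⟂ₘ volume := by
    refine ⟨Sᶜ, hSmeas.compl, ?_, by simpa using hSnull⟩
    rw [Measure.map_apply hYmeas hSmeas.compl,
      Measure.restrict_apply (hYmeas hSmeas.compl)]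
    refine measure_mono_null (fun ξ hξ => ?_) hNnull
    by_contra hξN
    simp only [hNdef, Set.mem_union, Set.mem_setOf_eq, not_or, not_not] at hξN
    obtain ⟨hY', hW'⟩ := hξN
    have hξIcc := hξ.2.1
    have hξnD := hξ.2.2
    have hYS : Y ξ ∉ S := hξ.1
    rcases eq_or_lt_of_le hξIcc.1 with h0 | h0
    · exact hYS (hSsub (Or.inr (by simp [← h0])))
    rcases eq_or_lt_of_le hξIcc.2 with h1 | h1
    · exact hYS (hSsub (Or.inr (by simp [h1])))
    have hw0 : w ξ = 0 := by
      by_contra hw0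
      exact hξnD ⟨⟨h0, h1⟩, hY', hW', hw0⟩
    exact hYS (hSsub (Or.inl ⟨ξ, ⟨hY', hw0⟩, rfl⟩))
  -- ### the bad set for u'
  set B : Set ℝ := {x | ¬ HasDerivAt V (v x) x} with hBdef
  have hBmeas : MeasurableSet B := (measurableSet_hasDerivAt V v hvm).compl
  have hBnull : volume B = 0 := ae_iff.1 hVd
  have hDB : volume (D ∩ Y ⁻¹' B) = 0 := by
    have hcover : D ∩ Y ⁻¹' B ⊆ ⋃ n : ℕ, (D ∩ {ξ | 1/(n+1 : ℝ) ≤ w ξ}) ∩ Y ⁻¹' B := by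
      intro ξ hξ
      obtain ⟨n, hn⟩ := exists_nat_one_div_lt (hwpos ξ hξ.1)
      exact Set.mem_iUnion.2 ⟨n, ⟨⟨hξ.1, hn.le⟩, hξ.2⟩⟩
    refine measure_mono_null hcover (measure_iUnion_null fun n => ?_)
    set s : Set ℝ := (D ∩ {ξ | 1/(n+1:ℝ) ≤ w ξ}) ∩ Y ⁻¹' B with hsdef
    have hsmeas : MeasurableSet s :=
      (hDmeas.inter (measurableSet_le measurable_const hwm)).inter (hYmeas hBmeas)
    have hsD : s ⊆ D := fun ξ hξ => hξ.1.1
    have himg : ∫⁻ ξ in s, ENNReal.ofReal (w ξ) = 0 := by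
      have h := (CoV s hsmeas hsD 1).symm
      simp only [Pi.one_apply, mul_one] at h
      rw [h, setLIntegral_one]
      refine measure_mono_null ?_ hBnull
      rintro x ⟨ξ, hξ, rfl⟩
      exact hξ.2
    have hlow : ENNReal.ofReal (1/(n+1:ℝ)) * volume s ≤ ∫⁻ ξ in s, ENNReal.ofReal (w ξ) := by
      rw [← setLIntegral_const s (ENNReal.ofReal (1/(n+1:ℝ)))]
      exact setLIntegral_mono hwm.ennreal_ofReal
        (fun ξ hξ => ENNReal.ofReal_le_ofReal hξ.1.2)
    have h0 : ENNReal.ofReal (1/(n+1:ℝ)) * volume s = 0 :=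
      le_antisymm (hlow.trans himg.le) zero_le
    have hne : ENNReal.ofReal (1/(n+1:ℝ)) ≠ 0 := by
      simp only [ne_eq, ENNReal.ofReal_eq_zero, not_le]
      positivity
    rcases mul_eq_zero.1 h0 with h | h
    · exact absurd h hne
    · exact h
  -- ### pointwise density identity on D
  have haeD : ∀ᵐ ξ ∂(volume.restrict D),
      ENNReal.ofReal (w ξ) * ENNReal.ofReal (u' (Y ξ) ^ 2) = 1 := by
    rw [ae_restrict_iff' hDmeas]
    have hDB' : ∀ᵐ ξ, ξ ∉ D ∩ Y ⁻¹' B := measure_eq_zero_iff_ae_notMem.1 hDB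
    filter_upwards [hDB'] with ξ hξ hξD
    have hYB : Y ξ ∉ B := fun hb => hξ ⟨hξD, hb⟩
    simp only [hBdef, Set.mem_setOf_eq, not_not] at hYB
    have hchain : HasDerivAt (V ∘ Y) (v (Y ξ) * w ξ) ξ := hYB.comp ξ hξD.2.1
    have hVYW : V ∘ Y =ᶠ[nhds ξ] W := by
      filter_upwards [isOpen_Ioo.mem_nhds hξD.1] with ζ hζ
      have hζI : ζ ∈ Set.Icc (0:ℝ) ξbar := ⟨hζ.1.le, hζ.2.le⟩
      simp only [Function.comp_apply]
      rw [hVu _ (hYmaps ζ hζI), hYy ζ hζI, huy ζ hζI, hWU ζ hζI]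
    have hW' : HasDerivAt W (v (Y ξ) * w ξ) ξ := hchain.congr_of_eventuallyEq hVYW.symm
    have huniq : v (Y ξ) * w ξ = w₂ ξ := hW'.unique hξD.2.2.1
    have hξIcc : ξ ∈ Set.Icc (0:ℝ) ξbar := hDsub hξD
    have hwval : w ξ = U' ξ ^ 2 := Set.indicator_of_mem hξIcc _
    have hw2val : w₂ ξ = U' ξ := Set.indicator_of_mem hξIcc _
    have hvval : v (Y ξ) = u' (Y ξ) := Set.indicator_of_mem (hYmaps ξ hξIcc) _
    have hU'ne : U' ξ ≠ 0 := by
      intro h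
      exact hξD.2.2.2 (by rw [hwval, h]; ring)
    have hkey : u' (Y ξ) * U' ξ ^ 2 = U' ξ := by
      rw [← hvval, ← hwval, ← hw2val]; exact huniq
    have hone : w ξ * u' (Y ξ) ^ 2 = 1 := by
      rw [hwval]
      have h2 : (u' (Y ξ) * U' ξ) * U' ξ = 1 * U' ξ := by
        rw [mul_assoc, ← pow_two, hkey, one_mul]
      have h3 := mul_right_cancel₀ hU'ne h2
      have : u' (Y ξ) = 1 / U' ξ := by
        rw [eq_div_iff hU'ne]
        exact h3
      rw [this]
      field_simp
    rw [← ENNReal.ofReal_mul (hwnn ξ), hone, ENNReal.ofReal_one]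
  -- ### absolutely continuous part is withDensity f
  have hYDmeas : MeasurableSet (Y '' D) :=
    hDmeas.image_of_continuousOn_injOn hYcont.continuousOn hYinj
  set g : ℝ → ENNReal := fun x => ENNReal.ofReal (u' x ^ 2) with hgdef
  have hgmeas : Measurable g := (hu'meas.pow_const 2).ennreal_ofReal
  set f : ℝ → ENNReal := (Y '' D).indicator g with hfdef
  have hfmeas : Measurable f := hgmeas.indicator hYDmeas
  have hm_eq : Measure.map Y (volume.restrict D) = volume.withDensity f := by
    ext A hA
    rw [Measure.map_apply hYmeas hA, Measure.restrict_apply (hYmeas hA),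
      withDensity_apply _ hA]
    have h1 : ∫⁻ x in A, f x = ∫⁻ x in Y '' D, A.indicator g x := by
      rw [← lintegral_indicator hA, ← lintegral_indicator hYDmeas]
      congr 1
      funext x
      rw [hfdef, Set.indicator_indicator, Set.indicator_indicator, Set.inter_comm]
    have h2 : ∫⁻ x in Y '' D, A.indicator g x
        = ∫⁻ ξ in D, ENNReal.ofReal (w ξ) * A.indicator g (Y ξ) :=
      CoV D hDmeas subset_rfl _
    have h3 : ∫⁻ ξ in D, ENNReal.ofReal (w ξ) * A.indicator g (Y ξ)
        = ∫⁻ ξ in D, (Y ⁻¹' A).indicator 1 ξ := by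
      refine lintegral_congr_ae ?_
      filter_upwards [haeD] with ξ hξ
      by_cases hmem : Y ξ ∈ A
      · rw [Set.indicator_of_mem hmem, Set.indicator_of_mem (show ξ ∈ Y ⁻¹' A from hmem)]
        simpa [hgdef] using hξ
      · rw [Set.indicator_of_notMem hmem,
          Set.indicator_of_notMem (show ξ ∉ Y ⁻¹' A from hmem)]
        simp
    have h4 : ∫⁻ ξ in D, (Y ⁻¹' A).indicator 1 ξ = volume (Y ⁻¹' A ∩ D) := by
      rw [lintegral_indicator (hYmeas hA)]
      simp only [Pi.one_apply]
      rw [setLIntegral_one, Measure.restrict_apply (hYmeas hA)]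
    rw [h1, h2, h3, h4]
  -- ### identification of the Radon–Nikodym derivative
  have hrn : f =ᵐ[volume] μ.rnDeriv volume :=
    Measure.eq_rnDeriv hfmeas hsing (by rw [hμsplit, hm_eq, add_comm])
  -- ### conclusion
  intro A hAI hA
  rw [withDensity_apply _ hA]
  rw [lintegral_congr_ae (ae_restrict_of_ae hrn.symm)]
  -- volume (I \ Y '' D) = 0
  have hYDsub : Y '' D ⊆ I := by
    rintro x ⟨ξ, hξ, rfl⟩
    exact hYmaps ξ (hDsub hξ)
  have hvolI : volume (Y '' D) = volume I := by
    have hIm : volume (Y '' D) = ∫⁻ ξ in D, ENNReal.ofReal (w ξ) := by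
      have h := CoV D hDmeas subset_rfl 1
      simp only [Pi.one_apply, mul_one] at h
      rw [← h, setLIntegral_one]
    have hzero : ∫⁻ ξ in Set.Icc (0:ℝ) ξbar \ D, ENNReal.ofReal (w ξ) = 0 := by
      have hae0 : ∀ᵐ ξ ∂(volume.restrict (Set.Icc (0:ℝ) ξbar \ D)),
          ENNReal.ofReal (w ξ) = 0 := by
        rw [ae_restrict_iff' (measurableSet_Icc.diff hDmeas)]
        have hN' : ∀ᵐ ξ : ℝ, ξ ∉ N := measure_eq_zero_iff_ae_notMem.1 hNnull
        have hE' : ∀ᵐ ξ : ℝ, ξ ∉ ({0, ξbar} : Set ℝ) := measure_eq_zero_iff_ae_notMem.1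
          ((Set.countable_insert.2 (Set.countable_singleton _)).measure_zero _)
        filter_upwards [hN', hE'] with ξ hξN hξE hξmem
        simp only [hNdef, Set.mem_union, Set.mem_setOf_eq, not_or, not_not] at hξN
        simp only [Set.mem_insert_iff, Set.mem_singleton_iff, not_or] at hξE
        have hξIcc := hξmem.1
        have hw0 : w ξ = 0 := by
          by_contra hw0
          exact hξmem.2 ⟨⟨hξIcc.1.lt_of_ne (Ne.symm hξE.1), hξIcc.2.lt_of_ne hξE.2⟩,
            hξN.1, hξN.2, hw0⟩
        rw [hw0]
        simp
      rw [lintegral_congr_ae hae0, lintegral_zero]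
    have hIccD : ∫⁻ ξ in D, ENNReal.ofReal (w ξ)
        = ∫⁻ ξ in Set.Icc (0:ℝ) ξbar, ENNReal.ofReal (w ξ) := by
      rw [hres, lintegral_add_measure, hzero, add_zero]
    have hIcc2 : ∫⁻ ξ in Set.Icc (0:ℝ) ξbar, ENNReal.ofReal (w ξ)
        = ENNReal.ofReal (∫ ξ in Set.Icc (0:ℝ) ξbar, U' ξ ^ 2) := by
      rw [ofReal_integral_eq_lintegral_ofReal hU2int
        (Eventually.of_forall fun ξ => sq_nonneg _)]
      refine setLIntegral_congr_fun measurableSet_Icc (fun ξ hξ => ?_)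
      rw [hwdef, Set.indicator_of_mem hξ]
    have hIval : volume I = ENNReal.ofReal (∫ ξ in Set.Icc (0:ℝ) ξbar, U' ξ ^ 2) := by
      rw [hI, Real.volume_Icc]
      congr 1
      have h1 : y ξbar = y₀ + ∫ ζ in (0:ℝ)..ξbar, U' ζ ^ 2 := hy ξbar
      have h2 : y 0 = y₀ := by rw [hy 0]; simp
      rw [h1, h2, intervalIntegral.integral_of_le hξbar.le,
        ← integral_Icc_eq_integral_Ioc]
      ring
    rw [hIm, hIccD, hIcc2, hIval]
  have hdiff : volume (I \ Y '' D) = 0 := by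
    have hfin : volume (Y '' D) ≠ ⊤ := by
      rw [hvolI, hI, Real.volume_Icc]
      exact ENNReal.ofReal_ne_top
    rw [measure_diff hYDsub hYDmeas.nullMeasurableSet hfin, hvolI, tsub_self]
  have hAs : volume (A \ Y '' D) = 0 :=
    measure_mono_null (Set.diff_subset_diff_left hAI) hdiff
  refine lintegral_congr_ae ((ae_restrict_iff' hA).2 ?_)
  have hAs' : ∀ᵐ x : ℝ, x ∉ A \ Y '' D := measure_eq_zero_iff_ae_notMem.1 hAs
  filter_upwards [hAs'] with x hx hxA
  have hxY : x ∈ Y '' D := by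
    by_contra h
    exact hx ⟨hxA, h⟩
  rw [hfdef]
  exact Set.indicator_of_mem hxY g
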